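/- arXiv:1512.08092 — 3 statements merged into one kernel-verified Lean document; each statement's English description precedes it below -/
import Mathlib

section
/- For every subset S ⊆ Π, the set I_S = {γ ∈ Δ⁺ : deg_S(γ) ≥ ⌊d(S)/2⌋ + 1} is an abelian upper ideal of (Δ⁺, ≼), and S(I_S) ⊆ S. (Equivalently, for every standard parabolic subalgebra p of g, the normaliser of the abelian ideal f_2(p) contains p, i.e., (f_1 ∘ f_2)(p) ⊇ p.) -/
open scoped InnerProductSpace

/-- An irreducible reduced crystallographic root system, spanning a finite-dimensional
real inner product space, together with a fixed base (set of simple roots) and the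
coefficient function expressing each root in the base. -/
structure RootSystemData (V : Type) [NormedAddCommGroup V] [InnerProductSpace ℝ V]
    [FiniteDimensional ℝ V] where
  roots : Set V
  finite : roots.Finite
  nonzero : ∀ γ ∈ roots, γ ≠ 0
  spans : Submodule.span ℝ roots = ⊤
  reflClosed : ∀ α ∈ roots, ∀ β ∈ roots, β - (2 * ⟪β, α⟫_ℝ / ⟪α, α⟫_ℝ) • α ∈ roots
  crystal : ∀ α ∈ roots, ∀ β ∈ roots, ∃ k : ℤ, 2 * ⟪β, α⟫_ℝ / ⟪α, α⟫_ℝ = (k : ℝ)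
  reduced : ∀ α ∈ roots, ∀ t : ℝ, t • α ∈ roots → t = 1 ∨ t = -1
  irred : ∀ A B : Set V, roots = A ∪ B → (∀ a ∈ A, ∀ b ∈ B, ⟪a, b⟫_ℝ = 0) →
    A = ∅ ∨ B = ∅
  simples : Finset V
  simples_sub : ↑simples ⊆ roots
  simples_indep : LinearIndependent ℝ (Subtype.val : {x : V // x ∈ simples} → V)
  coeff : V → V → ℤ
  coeff_spec : ∀ γ ∈ roots, γ = ∑ α ∈ simples, coeff γ α • α
  coeff_sign : ∀ γ ∈ roots, (∀ α ∈ simples, 0 ≤ coeff γ α) ∨ (∀ α ∈ simples, coeff γ α ≤ 0)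

namespace RootSystemData

variable {V : Type} [NormedAddCommGroup V] [InnerProductSpace ℝ V] [FiniteDimensional ℝ V]
variable (R : RootSystemData V)

/-- The set of positive roots `Δ⁺` (w.r.t. the base `simples`). -/
def posRoots : Set V := {γ | γ ∈ R.roots ∧ ∀ α ∈ R.simples, 0 ≤ R.coeff γ α}

/-- The partial order `μ ≼ ν`: `ν - μ` is a nonnegative integral combination of simple roots. -/
def rle (μ ν : V) : Prop := ∃ c : V → ℕ, ν - μ = ∑ α ∈ R.simples, (c α : ℤ) • α

/-- `θ` is the highest root. -/
def IsHighest (θ : V) : Prop := θ ∈ R.posRoots ∧ ∀ γ ∈ R.roots, R.rle γ θ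

/-- `γ` is a long root: a root of maximal length. -/
def IsLong (γ : V) : Prop := γ ∈ R.roots ∧ ∀ γ' ∈ R.roots, ‖γ'‖ ≤ ‖γ‖

/-- `I` is an upper ideal of `(Δ⁺, ≼)`. -/
def IsUpperIdeal (I : Set V) : Prop :=
  I ⊆ R.posRoots ∧ ∀ ν ∈ I, ∀ γ ∈ R.posRoots, R.rle ν γ → γ ∈ I

/-- `I` is an abelian upper ideal of `(Δ⁺, ≼)`. -/
def IsAbelianIdeal (I : Set V) : Prop :=
  R.IsUpperIdeal I ∧ ∀ γ₁ ∈ I, ∀ γ₂ ∈ I, γ₁ + γ₂ ∉ R.roots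

/-- The set of minimal elements of `M ⊆ Δ⁺` w.r.t. `≼`. -/
def minSet (M : Set V) : Set V := {γ | γ ∈ M ∧ ∀ ν ∈ M, R.rle ν γ → ν = γ}

/-- The set of maximal elements of `M ⊆ Δ⁺` w.r.t. `≼`. -/
def maxSet (M : Set V) : Set V := {γ | γ ∈ M ∧ ∀ ν ∈ M, R.rle γ ν → ν = γ}

/-- `S(I) = {α ∈ Π : ∃ γ ∈ min(I), γ - α ∈ Δ⁺ ∪ {0}}`; the complement `Π ∖ S(I)` is the
set of simple roots of the standard Levi subalgebra of the normaliser of the ideal `I`. -/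
def normS (I : Set V) : Set V :=
  {α | α ∈ R.simples ∧ ∃ γ ∈ R.minSet I, (γ - α ∈ R.posRoots ∨ γ = α)}

/-- `H = {γ ∈ Δ⁺ : (γ, θ) ≠ 0}`. -/
def Hset (θ : V) : Set V := {γ | γ ∈ R.posRoots ∧ ⟪γ, θ⟫_ℝ ≠ 0}

/-- `deg_S(γ) = Σ_{α ∈ S} [γ:α]`. -/
def degS (S : Finset V) (γ : V) : ℤ := ∑ α ∈ S, R.coeff γ α

/-- `I_S = {γ ∈ Δ⁺ : deg_S(γ) ≥ ⌊d(S)/2⌋ + 1}`, where `d(S) = deg_S(θ)`: the abelian ideal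
`g(≥ ⌊hot(p)/2⌋ + 1)` associated with the standard parabolic subalgebra `p(S)`. -/
def idealS (S : Finset V) (θ : V) : Set V :=
  {γ | γ ∈ R.posRoots ∧ R.degS S θ / 2 + 1 ≤ R.degS S γ}

/-- The highest root `θ` is fundamental with `α_θ` the unique simple root not
orthogonal to `θ`, and `(θ, α_θ∨) = 1`. -/
def IsFundamental (θ αθ : V) : Prop :=
  αθ ∈ R.simples ∧ ⟪θ, αθ⟫_ℝ ≠ 0 ∧ (∀ β ∈ R.simples, ⟪θ, β⟫_ℝ ≠ 0 → β = αθ) ∧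
    2 * ⟪θ, αθ⟫_ℝ / ⟪αθ, αθ⟫_ℝ = 1

end RootSystemData

/-- The reflection `s_α`. -/
noncomputable def rsRefl {V : Type} [NormedAddCommGroup V] [InnerProductSpace ℝ V] (α x : V) : V :=
  x - (2 * ⟪x, α⟫_ℝ / ⟪α, α⟫_ℝ) • α

/-- The element of the Weyl group given by the word `l = [α₁, …, α_m]`,
namely `s_{α₁} ∘ ⋯ ∘ s_{α_m}`; its inverse is `wordMap l.reverse`. -/
noncomputable def wordMap {V : Type} [NormedAddCommGroup V] [InnerProductSpace ℝ V] (l : List V) : V → V :=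
  l.foldr (fun α f => rsRefl α ∘ f) id


section Aux

open scoped Classical

variable {V : Type} [NormedAddCommGroup V] [InnerProductSpace ℝ V] [FiniteDimensional ℝ V]
variable (R : RootSystemData V)

lemma RootSystemData.coeff_unique (f g : V → ℤ)
    (h : ∑ α ∈ R.simples, f α • α = ∑ α ∈ R.simples, g α • α) :
    ∀ α ∈ R.simples, f α = g α := by
  have h0 : ∑ α ∈ R.simples.attach, ((f α.1 - g α.1 : ℤ) : ℝ) • (α.1 : V) = 0 := by
    rw [Finset.sum_attach R.simples (fun a => ((f a - g a : ℤ) : ℝ) • a)]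
    have : ∀ a ∈ R.simples, ((f a - g a : ℤ) : ℝ) • a = f a • a - g a • a := by
      intro a _
      rw [Int.cast_smul_eq_zsmul, sub_zsmul]; abel
    rw [Finset.sum_congr rfl this, Finset.sum_sub_distrib, h, sub_self]
  have hli := linearIndependent_iff'.mp R.simples_indep R.simples.attach
    (fun i => ((f i.1 - g i.1 : ℤ) : ℝ)) h0
  intro α hα
  have := hli ⟨α, hα⟩ (Finset.mem_attach _ _)
  have : ((f α - g α : ℤ) : ℝ) = 0 := this
  have : (f α - g α : ℤ) = 0 := by exact_mod_cast this
  omega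

lemma RootSystemData.coeff_add (x y : V) (hx : x ∈ R.roots) (hy : y ∈ R.roots) (hxy : x + y ∈ R.roots) :
    ∀ α ∈ R.simples, R.coeff (x + y) α = R.coeff x α + R.coeff y α := by
  apply R.coeff_unique
  rw [← R.coeff_spec _ hxy]
  have : ∀ a ∈ R.simples, (R.coeff x a + R.coeff y a) • a = R.coeff x a • a + R.coeff y a • a := by
    intro a _; rw [add_zsmul]
  rw [Finset.sum_congr rfl this, Finset.sum_add_distrib, ← R.coeff_spec _ hx, ← R.coeff_spec _ hy]

lemma RootSystemData.coeff_simple (α : V) (hα : α ∈ R.simples) :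
    ∀ β ∈ R.simples, R.coeff α β = if β = α then 1 else 0 := by
  apply R.coeff_unique
  rw [← R.coeff_spec _ (R.simples_sub hα)]
  have : ∀ a ∈ R.simples, (if a = α then (1:ℤ) else 0) • a = if a = α then a else 0 := by
    intro a _; split <;> simp
  rw [Finset.sum_congr rfl this, Finset.sum_ite_eq' R.simples α (fun a => a), if_pos hα]

lemma RootSystemData.coeff_le_of_rle (ν γ : V) (hν : ν ∈ R.roots) (hγ : γ ∈ R.roots) (h : R.rle ν γ) :
    ∀ α ∈ R.simples, R.coeff ν α ≤ R.coeff γ α := by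
  obtain ⟨c, hc⟩ := h
  have key : ∀ α ∈ R.simples, R.coeff γ α = R.coeff ν α + (c α : ℤ) := by
    apply R.coeff_unique
    rw [← R.coeff_spec _ hγ]
    have : ∀ a ∈ R.simples, (R.coeff ν a + (c a : ℤ)) • a = R.coeff ν a • a + (c a : ℤ) • a := by
      intro a _; rw [add_zsmul]
    rw [Finset.sum_congr rfl this, Finset.sum_add_distrib, ← R.coeff_spec _ hν, ← hc]
    abel
  intro α hα
  have := key α hα
  omega

lemma RootSystemData.degS_le_of_rle (S : Finset V) (hS : S ⊆ R.simples) (ν γ : V)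
    (hν : ν ∈ R.roots) (hγ : γ ∈ R.roots) (h : R.rle ν γ) :
    R.degS S ν ≤ R.degS S γ := by
  apply Finset.sum_le_sum
  intro α hα
  exact R.coeff_le_of_rle ν γ hν hγ h α (hS hα)

end Aux

/-- Remark 4.5: for every `S ⊆ Π`, the set
`I_S = {γ ∈ Δ⁺ : deg_S(γ) ≥ ⌊d(S)/2⌋ + 1}` is an abelian upper ideal and `S(I_S) ⊆ S`
(i.e. the normaliser of the abelian ideal `f₂(p(S))` contains `p(S)`). -/
theorem stmt17 {V : Type} [NormedAddCommGroup V] [InnerProductSpace ℝ V] [FiniteDimensional ℝ V]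
    (R : RootSystemData V) (θ : V) (hθ : R.IsHighest θ) :
    ∀ S : Finset V, S ⊆ R.simples →
      R.IsAbelianIdeal (R.idealS S θ) ∧ R.normS (R.idealS S θ) ⊆ ↑S := by
  intro S hS
  classical
  obtain ⟨⟨hθroots, hθpos⟩, hθhigh⟩ := hθ
  -- d ≥ 0
  have hd0 : 0 ≤ R.degS S θ := Finset.sum_nonneg fun α hα => hθpos α (hS hα)
  -- degS of any root with rle to θ is ≤ d; every root satisfies rle to θ
  have hdub : ∀ γ ∈ R.roots, R.degS S γ ≤ R.degS S θ := fun γ hγ =>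
    R.degS_le_of_rle S hS γ θ hγ hθroots (hθhigh γ hγ)
  have hupper : R.IsUpperIdeal (R.idealS S θ) := by
    constructor
    · intro γ hγ; exact hγ.1
    · rintro ν ⟨hν, hνdeg⟩ γ hγ hrle
      refine ⟨hγ, le_trans hνdeg (R.degS_le_of_rle S hS ν γ hν.1 hγ.1 hrle)⟩
  have habel : ∀ γ₁ ∈ R.idealS S θ, ∀ γ₂ ∈ R.idealS S θ, γ₁ + γ₂ ∉ R.roots := by
    rintro γ₁ ⟨hγ₁, hd₁⟩ γ₂ ⟨hγ₂, hd₂⟩ hsum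
    have hadd := R.coeff_add γ₁ γ₂ hγ₁.1 hγ₂.1 hsum
    have hdeg : R.degS S (γ₁ + γ₂) = R.degS S γ₁ + R.degS S γ₂ := by
      unfold RootSystemData.degS
      rw [← Finset.sum_add_distrib]
      exact Finset.sum_congr rfl fun α hα => hadd α (hS hα)
    have hle := hdub _ hsum
    omega
  refine ⟨⟨hupper, habel⟩, ?_⟩
  -- normS ⊆ S
  intro α hα
  obtain ⟨hαPi, γ, hγmin, hcase⟩ := hα
  by_contra hαS
  have hαS' : α ∉ S := hαS
  -- degS S α = 0
  have hdegα : R.degS S α = 0 := by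
    apply Finset.sum_eq_zero
    intro β hβ
    rw [R.coeff_simple α hαPi β (hS hβ)]
    exact if_neg (by rintro rfl; exact hαS' hβ)
  obtain ⟨⟨hγpos, hγdeg⟩, hγminimal⟩ := hγmin
  rcases hcase with hsub | rfl
  · -- γ - α ∈ Δ⁺ : then γ - α ∈ I_S, contradicting minimality
    have hroots : γ - α + α ∈ R.roots := by rw [sub_add_cancel]; exact hγpos.1
    have hadd := R.coeff_add (γ - α) α hsub.1 (R.simples_sub hαPi) hroots
    have hdeg : R.degS S γ = R.degS S (γ - α) + R.degS S α := by
      unfold RootSystemData.degS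
      rw [← Finset.sum_add_distrib]
      refine Finset.sum_congr rfl fun β hβ => ?_
      have := hadd β (hS hβ)
      rw [sub_add_cancel] at this
      exact this
    have hmem : γ - α ∈ R.idealS S θ := ⟨hsub, by omega⟩
    have hrle : R.rle (γ - α) γ := by
      refine ⟨fun β => if β = α then 1 else 0, ?_⟩
      have : ∀ a ∈ R.simples, ((if a = α then (1:ℕ) else 0 : ℕ) : ℤ) • a
          = if a = α then a else 0 := by
        intro a _; split <;> simp
      rw [Finset.sum_congr rfl this, Finset.sum_ite_eq' R.simples α (fun a => a), if_pos hαPi]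
      abel
    have := hγminimal (γ - α) hmem hrle
    have hα0 : α = 0 := by
      have : γ - α = γ := this
      have := sub_eq_self.mp this
      simpa using this
    exact R.nonzero α (R.simples_sub hαPi) hα0
  · -- γ = α : degS α = 0 but must be ≥ d/2 + 1 ≥ 1
    omega
end

section
/- Let Δ be of type A_n with simple roots α_1, …, α_n numbered consecutively (α_i = ε_i − ε_{i+1}). Let I be a nonempty abelian upper ideal of (Δ⁺, ≼) whose set of minimal elements is {γ_1, …, γ_k}, where γ_t = α_{i_t} + α_{i_t+1} + ⋯ + α_{j_t} with i_t ≤ j_t, and assume i_1 ≤ i_2 ≤ ⋯ ≤ i_k. Then 1 ≤ i_1 < i_2 < ⋯ < i_k ≤ j_1 < j_2 < ⋯ < j_k ≤ n, and S(I) = {α_{i_1}, …, α_{i_k}} ∪ {α_{j_1}, …, α_{j_k}}. -/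
open scoped InnerProductSpace

section Aux

variable {V : Type} [NormedAddCommGroup V] [InnerProductSpace ℝ V] [FiniteDimensional ℝ V]

noncomputable local instance : DecidableEq V := Classical.decEq V

variable (R : RootSystemData V) {n : ℕ} {e : Fin n → V}

lemma aux_simples_eq (he : Function.Injective e)
    (hrange : (↑R.simples : Set V) = Set.range e) :
    R.simples = Finset.univ.image e := by
  apply Finset.coe_injective
  simp [hrange, Set.image_univ]

lemma aux_mem_simples (hrange : (↑R.simples : Set V) = Set.range e) (l : Fin n) :
    e l ∈ R.simples := by
  have : e l ∈ (↑R.simples : Set V) := by rw [hrange]; exact Set.mem_range_self l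
  exact this

lemma aux_sum_simples {M : Type*} [AddCommMonoid M] (he : Function.Injective e)
    (hrange : (↑R.simples : Set V) = Set.range e) (f : V → M) :
    ∑ α ∈ R.simples, f α = ∑ l, f (e l) := by
  rw [aux_simples_eq R he hrange, Finset.sum_image (fun a _ b _ h => he h)]

lemma aux_indep (he : Function.Injective e)
    (hrange : (↑R.simples : Set V) = Set.range e) : LinearIndependent ℝ e := by
  have hcomp : e = (Subtype.val : {x : V // x ∈ R.simples} → V) ∘
      fun l => (⟨e l, aux_mem_simples R hrange l⟩ : {x : V // x ∈ R.simples}) := rfl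
  rw [hcomp]
  exact R.simples_indep.comp _ (fun a b hab => he (congrArg Subtype.val hab))

lemma aux_uniq (he : Function.Injective e)
    (hrange : (↑R.simples : Set V) = Set.range e) (d d' : Fin n → ℤ)
    (h : ∑ l, d l • e l = ∑ l, d' l • e l) : d = d' := by
  have hind := aux_indep R he hrange
  funext l
  have h2 : ∑ m, ((d m - d' m : ℤ) : ℝ) • e m = 0 := by
    push_cast
    simp only [sub_smul, Finset.sum_sub_distrib]
    rw [sub_eq_zero]
    have : ∀ m : Fin n, ((d m : ℝ)) • e m = d m • e m := fun m => by
      exact Int.cast_smul_eq_zsmul ℝ (d m) (e m)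
    simp only [this, fun m => Int.cast_smul_eq_zsmul ℝ (d' m) (e m)]
    exact_mod_cast h
  have := Fintype.linearIndependent_iff.mp hind _ h2 l
  exact_mod_cast sub_eq_zero.mp (by exact_mod_cast this)

lemma aux_inner_pos {x : V} (hx : x ≠ 0) : (0:ℝ) < ⟪x, x⟫_ℝ := by
  rw [real_inner_self_eq_norm_sq]
  have : 0 < ‖x‖ := norm_pos_iff.mpr hx
  positivity

lemma aux_coeff (he : Function.Injective e)
    (hrange : (↑R.simples : Set V) = Set.range e) {g : V} (hg : g ∈ R.roots)
    (d : Fin n → ℤ) (hd : g = ∑ l, d l • e l) (l : Fin n) : R.coeff g (e l) = d l := by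
  have h1 : g = ∑ m, R.coeff g (e m) • e m :=
    (R.coeff_spec g hg).trans (aux_sum_simples R he hrange (fun α => R.coeff g α • α))
  have := aux_uniq R he hrange (fun m => R.coeff g (e m)) d (by rw [← h1, ← hd])
  exact congrFun this l

lemma aux_ind_sum (s : Finset (Fin n)) :
    ∑ l, (if l ∈ s then (1 : ℤ) else 0) • e l = ∑ l ∈ s, e l := by
  have h : ∀ l, (if l ∈ s then (1:ℤ) else 0) • e l = if l ∈ s then e l else 0 :=
    fun l => by split <;> simp
  simp only [h]
  rw [Finset.sum_ite_mem, Finset.univ_inter]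

lemma aux_orth (hadj : ∀ a b : Fin n, a ≠ b →
      (⟪e a, e b⟫_ℝ ≠ 0 ↔ ((a : ℕ) + 1 = b ∨ (b : ℕ) + 1 = a)))
    {a b : Fin n} (hne : a ≠ b) (h1 : (a : ℕ) + 1 ≠ b) (h2 : (b : ℕ) + 1 ≠ a) :
    ⟪e a, e b⟫_ℝ = 0 := by
  by_contra h
  rcases (hadj a b hne).mp h with h' | h' <;> [exact h1 h'; exact h2 h']

lemma aux_adj_neg (he : Function.Injective e)
    (hrange : (↑R.simples : Set V) = Set.range e)
    (hadj : ∀ a b : Fin n, a ≠ b →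
      (⟪e a, e b⟫_ℝ ≠ 0 ↔ ((a : ℕ) + 1 = b ∨ (b : ℕ) + 1 = a)))
    {a b : Fin n} (hab : (a : ℕ) + 1 = (b : ℕ)) : ⟪e a, e b⟫_ℝ < 0 := by
  have hne : a ≠ b := by intro h; rw [h] at hab; omega
  have hne0 : ⟪e a, e b⟫_ℝ ≠ 0 := (hadj a b hne).mpr (Or.inl hab)
  rcases lt_or_gt_of_ne hne0 with h | h
  · exact h
  exfalso
  have hbr : e b ∈ R.roots := R.simples_sub (aux_mem_simples R hrange b)
  have har : e a ∈ R.roots := R.simples_sub (aux_mem_simples R hrange a)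
  obtain ⟨c, hc⟩ := R.crystal (e b) hbr (e a) har
  have hδ := R.reflClosed (e b) hbr (e a) har
  rw [hc] at hδ
  have hbb : (0:ℝ) < ⟪e b, e b⟫_ℝ := aux_inner_pos (R.nonzero _ hbr)
  have hcpos : (0:ℝ) < (c : ℝ) := by
    rw [← hc]
    positivity
  have hc1 : 1 ≤ c := by exact_mod_cast hcpos
  set δ := e a - (c : ℝ) • e b with hδdef
  have hδrep : δ = ∑ l, ((if l = a then (1:ℤ) else 0) + (if l = b then -c else 0)) • e l := by
    simp only [add_smul, Finset.sum_add_distrib]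
    have h1 : ∑ l, (if l = a then (1:ℤ) else 0) • e l = e a := by
      simp [Finset.sum_ite_eq']
    have h2 : ∑ l, (if l = b then (-c : ℤ) else 0) • e l = -((c:ℝ) • e b) := by
      have h3 : ∀ l, (if l = b then (-c : ℤ) else 0) • e l
          = if l = b then (-c : ℤ) • e b else 0 := fun l => by split <;> simp_all
      simp only [h3, Finset.sum_ite_eq', Finset.mem_univ, if_true]
      rw [← Int.cast_smul_eq_zsmul ℝ (-c) (e b)]
      push_cast
      rw [neg_smul]
    rw [h1, h2, hδdef, sub_eq_add_neg]
  have hca := aux_coeff R he hrange hδ _ hδrep a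
  have hcb := aux_coeff R he hrange hδ _ hδrep b
  simp [hne, hne.symm] at hca hcb
  rcases R.coeff_sign δ hδ with hs | hs
  · have := hs (e b) (aux_mem_simples R hrange b)
    omega
  · have := hs (e a) (aux_mem_simples R hrange a)
    omega
lemma aux_add_root (hlaced : ∀ g ∈ R.roots, ∀ g' ∈ R.roots, ‖g‖ = ‖g'‖)
    {α β : V} (hα : α ∈ R.roots) (hβ : β ∈ R.roots)
    (hneg : ⟪α, β⟫_ℝ < 0) (hne : α + β ≠ 0) : α + β ∈ R.roots := by
  obtain ⟨c, hc⟩ := R.crystal α hα β hβ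
  have hαα : (0:ℝ) < ⟪α, α⟫_ℝ := aux_inner_pos (R.nonzero _ hα)
  have hββ : (0:ℝ) < ⟪β, β⟫_ℝ := aux_inner_pos (R.nonzero _ hβ)
  have heq : ⟪α, α⟫_ℝ = ⟪β, β⟫_ℝ := by
    rw [real_inner_self_eq_norm_sq, real_inner_self_eq_norm_sq, hlaced α hα β hβ]
  have hba : ⟪β, α⟫_ℝ = ⟪α, β⟫_ℝ := real_inner_comm α β
  have hc2 : 2 * ⟪β, α⟫_ℝ = (c:ℝ) * ⟪α, α⟫_ℝ := by
    field_simp at hc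
    linarith [hc]
  have hcneg : (c:ℝ) < 0 := by
    rw [← hc]
    apply div_neg_of_neg_of_pos _ hαα
    linarith
  have hcneg' : c < 0 := by exact_mod_cast hcneg
  rcases eq_or_lt_of_le (show c ≤ -1 by omega) with hceq | hclt
  · have hrefl := R.reflClosed α hα β hβ
    rw [hc, hceq] at hrefl
    have : β - ((-1 : ℤ) : ℝ) • α = α + β := by
      push_cast
      rw [neg_smul, one_smul, sub_neg_eq_add, add_comm]
    rwa [this] at hrefl
  · exfalso
    have hcle : (c:ℝ) ≤ -2 := by exact_mod_cast (by omega : c ≤ -2)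
    have hzero : ⟪α + β, α + β⟫_ℝ ≤ 0 := by
      rw [real_inner_add_add_self]
      nlinarith
    exact hne (real_inner_self_nonpos.mp hzero)

lemma aux_split {a b b' c : Fin n} (hab : (a:ℕ) ≤ b) (hbb' : (b:ℕ) + 1 = (b':ℕ))
    (hb'c : (b':ℕ) ≤ c) :
    ∑ l ∈ Finset.Icc a b, e l + ∑ l ∈ Finset.Icc b' c, e l = ∑ l ∈ Finset.Icc a c, e l := by
  rw [← Finset.sum_union (by
    rw [Finset.disjoint_left]
    intro x hx hx'
    simp only [Finset.mem_Icc, Fin.le_def] at hx hx'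
    omega)]
  apply Finset.sum_congr _ (fun _ _ => rfl)
  ext l
  simp only [Finset.mem_union, Finset.mem_Icc, Fin.le_def]
  omega

lemma aux_icc_ne_zero (he : Function.Injective e)
    (hrange : (↑R.simples : Set V) = Set.range e) {a b : Fin n} (hab : a ≤ b) :
    (∑ l ∈ Finset.Icc a b, e l) ≠ 0 := by
  intro h0
  have h1 : ∑ l, (if l ∈ Finset.Icc a b then (1:ℤ) else 0) • e l = ∑ l, (0:ℤ) • e l := by
    rw [aux_ind_sum, h0]
    simp
  have := congrFun (aux_uniq R he hrange _ _ h1) a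
  simp [Finset.mem_Icc, hab] at this

lemma aux_icc_root (he : Function.Injective e)
    (hrange : (↑R.simples : Set V) = Set.range e)
    (hadj : ∀ a b : Fin n, a ≠ b →
      (⟪e a, e b⟫_ℝ ≠ 0 ↔ ((a : ℕ) + 1 = b ∨ (b : ℕ) + 1 = a)))
    (hlaced : ∀ g ∈ R.roots, ∀ g' ∈ R.roots, ‖g‖ = ‖g'‖) :
    ∀ m : ℕ, ∀ a b : Fin n, a ≤ b → (b:ℕ) - (a:ℕ) = m →
      (∑ l ∈ Finset.Icc a b, e l) ∈ R.roots := by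
  intro m
  induction m with
  | zero =>
    intro a b hab h0
    have : a = b := Fin.ext (by rw [Fin.le_def] at hab; omega)
    subst this
    rw [Finset.Icc_self, Finset.sum_singleton]
    exact R.simples_sub (aux_mem_simples R hrange a)
  | succ m ih =>
    intro a b hab hm
    rw [Fin.le_def] at hab
    have hblt : (a:ℕ) < (b:ℕ) := by omega
    set b' : Fin n := ⟨(b:ℕ) - 1, by omega⟩ with hb'def
    have hb'v : (b':ℕ) = (b:ℕ) - 1 := rfl
    have h1 : (a:ℕ) ≤ (b':ℕ) := by omega
    have h2 : (b':ℕ) + 1 = (b:ℕ) := by omega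
    have hsum := aux_split (e := e) (a := a) (b := b') (b' := b) (c := b) h1 h2 le_rfl
    rw [Finset.Icc_self, Finset.sum_singleton] at hsum
    have hIH := ih a b' (Fin.le_def.mpr h1) (by omega)
    have hin : ⟪∑ l ∈ Finset.Icc a b', e l, e b⟫_ℝ < 0 := by
      rw [sum_inner]
      have hb'mem : b' ∈ Finset.Icc a b' := by
        simp only [Finset.mem_Icc, Fin.le_def, le_refl, and_true]
        omega
      rw [Finset.sum_eq_sum_sdiff_singleton_add hb'mem]
      have hrest : ∑ l ∈ Finset.Icc a b' \ {b'}, ⟪e l, e b⟫_ℝ = 0 := by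
        apply Finset.sum_eq_zero
        intro l hl
        simp only [Finset.mem_sdiff, Finset.mem_Icc, Finset.mem_singleton, Fin.le_def] at hl
        have hlv : (l:ℕ) < (b':ℕ) := by
          rcases hl with ⟨⟨_, h⟩, hne⟩
          rcases lt_or_eq_of_le h with h' | h'
          · exact h'
          · exact absurd (Fin.ext h') hne
        apply aux_orth hadj
        · exact fun hh => by rw [hh] at hlv; omega
        · omega
        · omega
      rw [hrest, zero_add]
      exact aux_adj_neg R he hrange hadj h2
    have hne : (∑ l ∈ Finset.Icc a b', e l) + e b ≠ 0 := by
      rw [hsum]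
      exact aux_icc_ne_zero R he hrange (Fin.le_def.mpr hab)
    have := aux_add_root R hlaced hIH (R.simples_sub (aux_mem_simples R hrange b)) hin hne
    rwa [hsum] at this

lemma aux_icc_pos (he : Function.Injective e)
    (hrange : (↑R.simples : Set V) = Set.range e)
    (hadj : ∀ a b : Fin n, a ≠ b →
      (⟪e a, e b⟫_ℝ ≠ 0 ↔ ((a : ℕ) + 1 = b ∨ (b : ℕ) + 1 = a)))
    (hlaced : ∀ g ∈ R.roots, ∀ g' ∈ R.roots, ‖g‖ = ‖g'‖)
    {a b : Fin n} (hab : a ≤ b) : (∑ l ∈ Finset.Icc a b, e l) ∈ R.posRoots := by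
  have hroot := aux_icc_root R he hrange hadj hlaced _ a b hab rfl
  refine ⟨hroot, ?_⟩
  intro α hα
  have : α ∈ Set.range e := by rw [← hrange]; exact hα
  obtain ⟨l, rfl⟩ := this
  have := aux_coeff R he hrange hroot (fun l => if l ∈ Finset.Icc a b then 1 else 0)
    (aux_ind_sum (e := e) _).symm l
  rw [this]
  split <;> omega

lemma aux_rle (he : Function.Injective e)
    (hrange : (↑R.simples : Set V) = Set.range e) {μ ν : V} (d : Fin n → ℕ)
    (h : ν - μ = ∑ l, (d l : ℤ) • e l) : R.rle μ ν := by
  classical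
  refine ⟨fun x => if h' : ∃ l, e l = x then d h'.choose else 0, ?_⟩
  rw [aux_sum_simples R he hrange
    (fun α => (((if h' : ∃ l, e l = α then d h'.choose else 0 : ℕ) : ℤ)) • α), h]
  apply Finset.sum_congr rfl
  intro l _
  have hex : ∃ m, e m = e l := ⟨l, rfl⟩
  have hch : hex.choose = l := he hex.choose_spec
  rw [dif_pos hex, hch]

lemma aux_rle_icc (he : Function.Injective e)
    (hrange : (↑R.simples : Set V) = Set.range e) {a b a' b' : Fin n}
    (h1 : a' ≤ a) (h2 : b ≤ b') :
    R.rle (∑ l ∈ Finset.Icc a b, e l) (∑ l ∈ Finset.Icc a' b', e l) := by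
  have hsub : Finset.Icc a b ⊆ Finset.Icc a' b' := Finset.Icc_subset_Icc h1 h2
  apply aux_rle R he hrange
    (fun l => if l ∈ Finset.Icc a' b' \ Finset.Icc a b then 1 else 0)
  have hd : ∑ l ∈ Finset.Icc a' b', e l - ∑ l ∈ Finset.Icc a b, e l
      = ∑ l ∈ Finset.Icc a' b' \ Finset.Icc a b, e l := by
    rw [← Finset.sum_sdiff hsub]
    abel
  rw [hd, ← aux_ind_sum (e := e) (Finset.Icc a' b' \ Finset.Icc a b)]
  apply Finset.sum_congr rfl
  intro l _
  split <;> simp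

lemma aux_icc_orth
    (hadj : ∀ a b : Fin n, a ≠ b →
      (⟪e a, e b⟫_ℝ ≠ 0 ↔ ((a : ℕ) + 1 = b ∨ (b : ℕ) + 1 = a)))
    {a b a' b' : Fin n} (hgap : (b:ℕ) + 1 < (a':ℕ)) :
    ⟪∑ l ∈ Finset.Icc a b, e l, ∑ l ∈ Finset.Icc a' b', e l⟫_ℝ = 0 := by
  rw [sum_inner]
  apply Finset.sum_eq_zero
  intro l hl
  rw [inner_sum]
  apply Finset.sum_eq_zero
  intro l' hl'
  simp only [Finset.mem_Icc, Fin.le_def] at hl hl'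
  apply aux_orth hadj
  · exact fun hh => by rw [hh] at hl; omega
  · omega
  · omega
end Aux

/-- from the proof of Theorem 4.4(i): in type `A_n` (path diagram
`e 0 — ⋯ — e (n-1)`, simply laced), if `I` is a nonempty abelian upper ideal whose set
of minimal elements is `{γ_1, …, γ_k}` with `γ_t = α_{i_t} + ⋯ + α_{j_t}` and
`i_1 ≤ ⋯ ≤ i_k`, then `i_1 < ⋯ < i_k ≤ j_1 < ⋯ < j_k` and
`S(I) = {α_{i_1}, …, α_{i_k}} ∪ {α_{j_1}, …, α_{j_k}}`. -/
theorem stmt18 {V : Type} [NormedAddCommGroup V] [InnerProductSpace ℝ V] [FiniteDimensional ℝ V]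
    (R : RootSystemData V) (θ : V) (hθ : R.IsHighest θ)
    (n : ℕ) (hn : 1 ≤ n) (e : Fin n → V) (he : Function.Injective e)
    (hrange : (↑R.simples : Set V) = Set.range e)
    (hadj : ∀ i j : Fin n, i ≠ j → (⟪e i, e j⟫_ℝ ≠ 0 ↔ ((i : ℕ) + 1 = j ∨ (j : ℕ) + 1 = i)))
    (hlaced : ∀ γ ∈ R.roots, ∀ γ' ∈ R.roots, ‖γ‖ = ‖γ'‖)
    (k : ℕ) (hk : 1 ≤ k) (i j : Fin k → Fin n)
    (hij : ∀ t, i t ≤ j t) (hmono : Monotone i)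
    (γ : Fin k → V) (hγ : ∀ t, γ t = ∑ l ∈ Finset.Icc (i t) (j t), e l)
    (hγinj : Function.Injective γ)
    (I : Set V) (hI : R.IsAbelianIdeal I) (hIne : I.Nonempty)
    (hminI : R.minSet I = Set.range γ) :
    StrictMono i ∧ StrictMono j ∧ (∀ s t : Fin k, i s ≤ j t) ∧
      R.normS I = Set.range (fun t => e (i t)) ∪ Set.range (fun t => e (j t)) := by
  classical
  obtain ⟨⟨hIsub, hIupper⟩, habel⟩ := hI
  have hγmin : ∀ t, γ t ∈ R.minSet I := fun t => by rw [hminI]; exact ⟨t, rfl⟩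
  have hγI : ∀ t, γ t ∈ I := fun t => (hγmin t).1
  have hijn : ∀ t, (i t : ℕ) ≤ (j t : ℕ) := fun t => Fin.le_def.mp (hij t)
  -- no nesting
  have hnest : ∀ s t : Fin k, i s ≤ i t → j t ≤ j s → s = t := by
    intro s t h1 h2
    have hr : R.rle (γ t) (γ s) := by
      rw [hγ s, hγ t]
      exact aux_rle_icc R he hrange h1 h2
    exact (hγinj ((hγmin s).2 (γ t) (hγI t) hr)).symm
  have hstri : StrictMono i := by
    intro s t hst
    rcases lt_or_eq_of_le (hmono hst.le) with h | h
    · exact h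
    · exfalso
      rcases le_total (j s) (j t) with hj | hj
      · exact (ne_of_lt hst).symm (hnest t s (le_of_eq h.symm) hj)
      · exact (ne_of_lt hst) (hnest s t (le_of_eq h) hj)
  have hstrj : StrictMono j := by
    intro s t hst
    rcases lt_or_ge (j s) (j t) with h | h
    · exact h
    · exact absurd (hnest s t (hstri hst).le h) (ne_of_lt hst)
  have hiltn : ∀ s : Fin k, (i s : ℕ) < n := fun s => (i s).isLt
  have hij2 : ∀ s t : Fin k, i s ≤ j t := by
    intro s t
    by_contra hcon
    rw [not_le, Fin.lt_def] at hcon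
    set c : Fin n := ⟨(i s : ℕ) - 1, by omega⟩ with hcdef
    have hcv : (c : ℕ) = (i s : ℕ) - 1 := rfl
    have hitc : (i t : ℕ) ≤ (c : ℕ) := by have := hijn t; omega
    have hμpos : (∑ l ∈ Finset.Icc (i t) c, e l) ∈ R.posRoots :=
      aux_icc_pos R he hrange hadj hlaced (Fin.le_def.mpr hitc)
    have hrleμ : R.rle (γ t) (∑ l ∈ Finset.Icc (i t) c, e l) := by
      rw [hγ t]
      exact aux_rle_icc R he hrange le_rfl (Fin.le_def.mpr (by have := hijn t; omega))
    have hμI : (∑ l ∈ Finset.Icc (i t) c, e l) ∈ I :=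
      hIupper (γ t) (hγI t) _ hμpos hrleμ
    apply habel _ hμI (γ s) (hγI s)
    rw [hγ s, aux_split hitc (by omega) (hijn s)]
    exact aux_icc_root R he hrange hadj hlaced _ (i t) (j s)
      (Fin.le_def.mpr (by have := hijn t; have := hijn s; omega)) rfl
  refine ⟨hstri, hstrj, hij2, ?_⟩
  apply Set.ext
  intro α
  constructor
  · rintro ⟨hαs, γ', hγ'min, hcase⟩
    rw [hminI] at hγ'min
    obtain ⟨t, rfl⟩ := hγ'min
    have hαr : α ∈ Set.range e := by rw [← hrange]; exact hαs
    obtain ⟨m, rfl⟩ := hαr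
    rcases hcase with hpos | heqα
    · -- γ t - e m ∈ posRoots
      have hδrep : γ t - e m = ∑ l, ((if l ∈ Finset.Icc (i t) (j t) then (1:ℤ) else 0)
          - (if l ∈ ({m} : Finset (Fin n)) then (1:ℤ) else 0)) • e l := by
        simp only [sub_smul]
        rw [Finset.sum_sub_distrib, aux_ind_sum, aux_ind_sum, Finset.sum_singleton, hγ t]
      have hge := hpos.2 (e m) (aux_mem_simples R hrange m)
      rw [aux_coeff R he hrange hpos.1 _ hδrep m] at hge
      rw [if_pos (Finset.mem_singleton_self m)] at hge
      have hmem : m ∈ Finset.Icc (i t) (j t) := by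
        by_contra hmem
        rw [if_neg hmem] at hge
        omega
      rw [Finset.mem_Icc, Fin.le_def, Fin.le_def] at hmem
      rcases eq_or_lt_of_le hmem.1 with hl | hl
      · left; exact ⟨t, congrArg e (Fin.ext hl)⟩
      rcases eq_or_lt_of_le hmem.2 with hr | hr
      · right; exact ⟨t, congrArg e (Fin.ext hr.symm)⟩
      exfalso
      -- disconnected support
      have hmn : (m : ℕ) < n := m.isLt
      set mlo : Fin n := ⟨(m : ℕ) - 1, by omega⟩ with hmlodef
      set mhi : Fin n := ⟨(m : ℕ) + 1, by have := (j t).isLt; omega⟩ with hmhidef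
      have hmlov : (mlo : ℕ) = (m : ℕ) - 1 := rfl
      have hmhiv : (mhi : ℕ) = (m : ℕ) + 1 := rfl
      have hs1 : ∑ l ∈ Finset.Icc (i t) mlo, e l + ∑ l ∈ Finset.Icc m (j t), e l
          = ∑ l ∈ Finset.Icc (i t) (j t), e l :=
        aux_split (by omega : (i t : ℕ) ≤ (mlo : ℕ)) (by omega) hmem.2
      have hs2 : ∑ l ∈ Finset.Icc m m, e l + ∑ l ∈ Finset.Icc mhi (j t), e l
          = ∑ l ∈ Finset.Icc m (j t), e l :=
        aux_split le_rfl (by omega) (by omega : (mhi : ℕ) ≤ (j t : ℕ))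
      rw [Finset.Icc_self, Finset.sum_singleton] at hs2
      have hδeq : γ t - e m = ∑ l ∈ Finset.Icc (i t) mlo, e l + ∑ l ∈ Finset.Icc mhi (j t), e l := by
        rw [hγ t, ← hs1, ← hs2]
        abel
      have hδ1 : (∑ l ∈ Finset.Icc (i t) mlo, e l) ∈ R.roots :=
        aux_icc_root R he hrange hadj hlaced _ (i t) mlo (Fin.le_def.mpr (by omega)) rfl
      have hδ2 : (∑ l ∈ Finset.Icc mhi (j t), e l) ∈ R.roots :=
        aux_icc_root R he hrange hadj hlaced _ mhi (j t) (Fin.le_def.mpr (by omega)) rfl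
      have horth : ⟪∑ l ∈ Finset.Icc (i t) mlo, e l, ∑ l ∈ Finset.Icc mhi (j t), e l⟫_ℝ = 0 :=
        aux_icc_orth hadj (by omega)
      have hδroot : γ t - e m ∈ R.roots := hpos.1
      have hn1 : ⟪∑ l ∈ Finset.Icc (i t) mlo, e l, ∑ l ∈ Finset.Icc (i t) mlo, e l⟫_ℝ
          = ⟪γ t - e m, γ t - e m⟫_ℝ := by
        rw [real_inner_self_eq_norm_sq, real_inner_self_eq_norm_sq, hlaced _ hδ1 _ hδroot]
      have hn2 : ⟪∑ l ∈ Finset.Icc mhi (j t), e l, ∑ l ∈ Finset.Icc mhi (j t), e l⟫_ℝ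
          = ⟪γ t - e m, γ t - e m⟫_ℝ := by
        rw [real_inner_self_eq_norm_sq, real_inner_self_eq_norm_sq, hlaced _ hδ2 _ hδroot]
      have hcalc : ⟪γ t - e m, γ t - e m⟫_ℝ = 0 := by
        have := real_inner_add_add_self (∑ l ∈ Finset.Icc (i t) mlo, e l)
          (∑ l ∈ Finset.Icc mhi (j t), e l)
        rw [horth, hn1, hn2, ← hδeq] at this
        linarith
      exact R.nonzero _ hδroot (inner_self_eq_zero.mp hcalc)
    · -- γ t = e m
      have h1 : (fun l => if l ∈ Finset.Icc (i t) (j t) then (1:ℤ) else 0)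
          = (fun l => if l ∈ ({m} : Finset (Fin n)) then (1:ℤ) else 0) := by
        apply aux_uniq R he hrange
        rw [aux_ind_sum, aux_ind_sum, Finset.sum_singleton, ← hγ t, heqα]
      have h2 := congrFun h1 (i t)
      rw [if_pos (Finset.mem_Icc.mpr ⟨le_rfl, hij t⟩)] at h2
      have him : i t = m := by
        by_contra hne
        rw [if_neg (by simpa using hne)] at h2
        omega
      left
      exact ⟨t, congrArg e him⟩
  · rintro (⟨t, rfl⟩ | ⟨t, rfl⟩)
    · refine ⟨aux_mem_simples R hrange (i t), γ t, hγmin t, ?_⟩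
      rcases eq_or_lt_of_le (hij t) with hd | hlt
      · right
        rw [hγ t, ← hd, Finset.Icc_self, Finset.sum_singleton]
      · left
        set s : Fin n := ⟨(i t : ℕ) + 1, by have := (j t).isLt; have := Fin.lt_def.mp hlt; omega⟩
          with hsdef
        have hsv : (s : ℕ) = (i t : ℕ) + 1 := rfl
        have hsplit : ∑ l ∈ Finset.Icc (i t) (i t), e l + ∑ l ∈ Finset.Icc s (j t), e l
            = ∑ l ∈ Finset.Icc (i t) (j t), e l :=
          aux_split le_rfl rfl (by have := Fin.lt_def.mp hlt; omega)
        rw [Finset.Icc_self, Finset.sum_singleton] at hsplit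
        have : γ t - e (i t) = ∑ l ∈ Finset.Icc s (j t), e l := by
          rw [hγ t, ← hsplit]
          abel
        rw [this]
        exact aux_icc_pos R he hrange hadj hlaced
          (Fin.le_def.mpr (by have := Fin.lt_def.mp hlt; omega))
    · refine ⟨aux_mem_simples R hrange (j t), γ t, hγmin t, ?_⟩
      rcases eq_or_lt_of_le (hij t) with hd | hlt
      · right
        rw [hγ t, ← hd, Finset.Icc_self, Finset.sum_singleton, hd]
      · left
        set p : Fin n := ⟨(j t : ℕ) - 1, by have := (j t).isLt; omega⟩ with hpdef
        have hpv : (p : ℕ) = (j t : ℕ) - 1 := rfl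
        have hsplit : ∑ l ∈ Finset.Icc (i t) p, e l + ∑ l ∈ Finset.Icc (j t) (j t), e l
            = ∑ l ∈ Finset.Icc (i t) (j t), e l :=
          aux_split (by have := Fin.lt_def.mp hlt; omega)
            (by have := Fin.lt_def.mp hlt; omega : (p : ℕ) + 1 = (j t : ℕ)) le_rfl
        rw [Finset.Icc_self, Finset.sum_singleton] at hsplit
        have : γ t - e (j t) = ∑ l ∈ Finset.Icc (i t) p, e l := by
          rw [hγ t, ← hsplit]
          abel
        rw [this]
        exact aux_icc_pos R he hrange hadj hlaced
          (Fin.le_def.mpr (by have := Fin.lt_def.mp hlt; omega))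
end

section
/- Let ᾱ be a long simple root with [θ:ᾱ] = 1. Then the set {γ ∈ Δ⁺ : [γ:ᾱ] = 1}, which equals {γ ∈ Δ⁺ : ᾱ ≼ γ}, is an abelian upper ideal of (Δ⁺, ≼) that is maximal with respect to inclusion among abelian upper ideals, and S of this ideal equals {ᾱ}. (This ideal is the maximal abelian ideal a(ᾱ)_max; it is the nilradical of the maximal standard parabolic subalgebra determined by ᾱ, which is its normaliser.) -/
open scoped InnerProductSpace

/-!
Every root has `ᾱ`-coefficient at most `[θ:ᾱ] = 1`, so `{γ ∈ Δ⁺ : [γ:ᾱ] = 1}` is an upper ideal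
and no sum of two of its elements is a root. For maximality, let `γ` be an element of maximal
height of `J` outside the ideal, so `[γ:ᾱ] = 0` and `(γ, θ) ≥ 0`. If `(γ, θ) > 0`, then `θ - γ`
lies in the ideal and `γ + (θ - γ) = θ`. If `(γ, θ) = 0`, then `(θ - γ, γ) < 0` yields a simple
root `α` with `(α, γ) < 0`, so `γ + α ∈ J`; by maximality `γ + α` lies in the ideal, which
forces `α = ᾱ ∈ J`, although `γ + ᾱ` is a root.
-/

namespace RootSystemData

variable {V : Type} [NormedAddCommGroup V] [InnerProductSpace ℝ V] [FiniteDimensional ℝ V]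
variable (R : RootSystemData V)

def height (γ : V) : ℤ := ∑ α ∈ R.simples, R.coeff γ α

lemma coeff_eq_of_eq_sum {γ : V} (hγ : γ ∈ R.roots) {f : V → ℤ}
    (h : γ = ∑ α ∈ R.simples, f α • α) : ∀ α ∈ R.simples, R.coeff γ α = f α := by
  have hli : LinearIndepOn ℤ id (R.simples : Set V) := R.simples_indep.restrict_scalars' ℤ
  exact linearIndepOn_finset_iffₛ.mp hli _ _ ((R.coeff_spec γ hγ).symm.trans h)

lemma coeff_add_s19 {β γ : V} (hβ : β ∈ R.roots) (hγ : γ ∈ R.roots) (hβγ : β + γ ∈ R.roots) :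
    ∀ α ∈ R.simples, R.coeff (β + γ) α = R.coeff β α + R.coeff γ α :=
  R.coeff_eq_of_eq_sum hβγ (f := fun α => R.coeff β α + R.coeff γ α) <| by
    simp only [add_smul, Finset.sum_add_distrib, ← R.coeff_spec β hβ, ← R.coeff_spec γ hγ]

lemma coeff_neg {γ : V} (hγ : γ ∈ R.roots) (hγ' : -γ ∈ R.roots) :
    ∀ α ∈ R.simples, R.coeff (-γ) α = -R.coeff γ α := by
  refine R.coeff_eq_of_eq_sum hγ' (f := fun α => -R.coeff γ α) ?_
  simp only [neg_smul, Finset.sum_neg_distrib]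
  rw [← R.coeff_spec γ hγ]

lemma coeff_simple_s19 [DecidableEq V] {α β : V} (hα : α ∈ R.simples) (hβ : β ∈ R.simples) :
    R.coeff α β = if β = α then 1 else 0 :=
  R.coeff_eq_of_eq_sum (R.simples_sub hα) (f := fun β => if β = α then 1 else 0)
    (by simp [ite_smul, hα]) β hβ

lemma coeff_simple_self {α : V} (hα : α ∈ R.simples) : R.coeff α α = 1 := by
  classical
  simp [R.coeff_simple_s19 hα hα]

lemma coeff_simple_of_ne {α β : V} (hα : α ∈ R.simples) (hβ : β ∈ R.simples) (hne : β ≠ α) :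
    R.coeff α β = 0 := by
  classical
  simp [R.coeff_simple_s19 hα hβ, hne]

lemma height_add_simple {γ α : V} (hγ : γ ∈ R.roots) (hα : α ∈ R.simples)
    (hγα : γ + α ∈ R.roots) : R.height (γ + α) = R.height γ + 1 := by
  classical
  simp only [height, Finset.sum_congr rfl (R.coeff_add_s19 hγ (R.simples_sub hα) hγα),
    Finset.sum_add_distrib, Finset.sum_congr rfl fun β hβ => R.coeff_simple_s19 hα hβ,
    Finset.sum_ite_eq', hα, if_true]

lemma exists_coeff_ne_zero {γ : V} (hγ : γ ∈ R.roots) : ∃ α ∈ R.simples, R.coeff γ α ≠ 0 := by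
  by_contra! h
  refine R.nonzero γ hγ ?_
  rw [R.coeff_spec γ hγ]
  exact Finset.sum_eq_zero fun α hα => by rw [h α hα, zero_smul]

lemma rle_iff_coeff_le {μ ν : V} (hμ : μ ∈ R.roots) (hν : ν ∈ R.roots) :
    R.rle μ ν ↔ ∀ α ∈ R.simples, R.coeff μ α ≤ R.coeff ν α := by
  constructor
  · rintro ⟨c, hc⟩ α hα
    have hcoeff : R.coeff ν α = R.coeff μ α + c α := by
      refine R.coeff_eq_of_eq_sum hν (f := fun α => R.coeff μ α + c α) ?_ α hα
      calc ν = (ν - μ) + μ := (sub_add_cancel ν μ).symm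
        _ = ∑ α ∈ R.simples, (c α : ℤ) • α + ∑ α ∈ R.simples, R.coeff μ α • α := by
          rw [hc, ← R.coeff_spec μ hμ]
        _ = _ := by simp only [add_smul, Finset.sum_add_distrib, add_comm]
    omega
  · intro h
    refine ⟨fun α => (R.coeff ν α - R.coeff μ α).toNat, ?_⟩
    have hsum : ∑ α ∈ R.simples, (((R.coeff ν α - R.coeff μ α).toNat : ℕ) : ℤ) • α
        = ∑ α ∈ R.simples, (R.coeff ν α - R.coeff μ α) • α :=
      Finset.sum_congr rfl fun α hα => by rw [Int.toNat_of_nonneg (sub_nonneg.mpr (h α hα))]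
    rw [hsum]
    simp only [sub_smul, Finset.sum_sub_distrib, ← R.coeff_spec ν hν, ← R.coeff_spec μ hμ]

lemma eq_of_rle_of_rle {μ ν : V} (hμ : μ ∈ R.roots) (hν : ν ∈ R.roots)
    (hμν : R.rle μ ν) (hνμ : R.rle ν μ) : μ = ν := by
  calc μ = ∑ α ∈ R.simples, R.coeff μ α • α := R.coeff_spec μ hμ
    _ = ∑ α ∈ R.simples, R.coeff ν α • α := Finset.sum_congr rfl fun α hα => by
      rw [le_antisymm ((R.rle_iff_coeff_le hμ hν).mp hμν α hα)
        ((R.rle_iff_coeff_le hν hμ).mp hνμ α hα)]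
    _ = ν := (R.coeff_spec ν hν).symm

lemma exists_simple_inner_neg_of_rle {μ ν x : V} (h : R.rle μ ν) (hneg : ⟪ν - μ, x⟫_ℝ < 0) :
    ∃ α ∈ R.simples, ⟪α, x⟫_ℝ < 0 := by
  obtain ⟨c, hc⟩ := h
  by_contra! hall
  refine hneg.not_ge ?_
  rw [hc, sum_inner]
  refine Finset.sum_nonneg fun α hα => ?_
  rw [← Int.cast_smul_eq_zsmul ℝ, real_inner_smul_left]
  exact mul_nonneg (by positivity) (hall α hα)

lemma neg_mem_roots {γ : V} (hγ : γ ∈ R.roots) : -γ ∈ R.roots := by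
  have hγγ : ⟪γ, γ⟫_ℝ ≠ 0 := (real_inner_self_pos.mpr (R.nonzero γ hγ)).ne'
  have h := R.reflClosed γ hγ γ hγ
  rwa [mul_div_assoc, div_self hγγ, mul_one, two_smul, sub_add_cancel_left] at h

/-- By Cauchy–Schwarz the Cartan integer is at most `2`, and `2` would force `β = γ`. -/
lemma two_mul_inner_div_eq_one {β γ : V} (hβ : β ∈ R.roots) (hγ : γ ∈ R.roots)
    (hpos : 0 < ⟪β, γ⟫_ℝ) (hne : β ≠ γ) (hle : ‖β‖ ≤ ‖γ‖) :
    2 * ⟪β, γ⟫_ℝ / ⟪γ, γ⟫_ℝ = 1 := by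
  obtain ⟨k, hk⟩ := R.crystal γ hγ β hβ
  have hγγ : 0 < ⟪γ, γ⟫_ℝ := real_inner_self_pos.mpr (R.nonzero γ hγ)
  have hkγ : (k : ℝ) * ⟪γ, γ⟫_ℝ = 2 * ⟪β, γ⟫_ℝ := by
    rw [← hk, div_mul_cancel₀ _ hγγ.ne']
  have hk_pos : (0 : ℝ) < k := by rw [← hk]; positivity
  have hCS : ⟪β, γ⟫_ℝ ≤ ‖β‖ * ‖γ‖ := real_inner_le_norm β γ
  rw [real_inner_self_eq_norm_sq] at hkγ hγγ
  have hk_lt : (k : ℝ) < 2 := by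
    by_contra! hk_ge
    refine hne (sub_eq_zero.mp (norm_eq_zero.mp (pow_eq_zero_iff two_ne_zero |>.mp ?_)))
    have hβγ : ‖β‖ ^ 2 ≤ ‖γ‖ ^ 2 := by gcongr
    nlinarith [norm_sub_sq_real β γ, sq_nonneg ‖β - γ‖]
  have hk_one : k = 1 := by
    have : 0 < k := by exact_mod_cast hk_pos
    have : k < 2 := by exact_mod_cast hk_lt
    omega
  rw [hk, hk_one, Int.cast_one]

lemma sub_mem_roots_of_inner_pos {β γ : V} (hβ : β ∈ R.roots) (hγ : γ ∈ R.roots)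
    (hpos : 0 < ⟪β, γ⟫_ℝ) (hne : β ≠ γ) : β - γ ∈ R.roots := by
  rcases le_total ‖β‖ ‖γ‖ with hle | hle
  · have h := R.reflClosed γ hγ β hβ
    rwa [R.two_mul_inner_div_eq_one hβ hγ hpos hne hle, one_smul] at h
  · have h := R.reflClosed β hβ γ hγ
    rw [R.two_mul_inner_div_eq_one hγ hβ (by rwa [real_inner_comm]) hne.symm hle, one_smul] at h
    simpa using R.neg_mem_roots h

lemma add_mem_roots_of_inner_neg {β γ : V} (hβ : β ∈ R.roots) (hγ : γ ∈ R.roots)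
    (hneg : ⟪β, γ⟫_ℝ < 0) (hne : β ≠ -γ) : β + γ ∈ R.roots := by
  simpa using R.sub_mem_roots_of_inner_pos hβ (R.neg_mem_roots hγ)
    (by rwa [inner_neg_right, neg_pos]) hne

lemma simple_mem_posRoots {α : V} (hα : α ∈ R.simples) : α ∈ R.posRoots := by
  refine ⟨R.simples_sub hα, fun β hβ => ?_⟩
  rcases eq_or_ne β α with rfl | hne
  · rw [R.coeff_simple_self hα]; exact zero_le_one
  · rw [R.coeff_simple_of_ne hα hβ hne]

lemma mem_posRoots_of_coeff_pos {γ α : V} (hγ : γ ∈ R.roots) (hα : α ∈ R.simples)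
    (hpos : 0 < R.coeff γ α) : γ ∈ R.posRoots :=
  (R.coeff_sign γ hγ).elim (fun h => ⟨hγ, h⟩) fun h => absurd (h α hα) hpos.not_ge

lemma ne_neg_of_mem_posRoots {β γ : V} (hβ : β ∈ R.posRoots) (hγ : γ ∈ R.posRoots) :
    β ≠ -γ := by
  rintro rfl
  obtain ⟨α, hα, hne⟩ := R.exists_coeff_ne_zero hβ.1
  have := R.coeff_neg hγ.1 hβ.1 α hα
  have := hβ.2 α hα
  have := hγ.2 α hα
  omega

lemma sub_simple_not_mem_posRoots {α β : V} (hα : α ∈ R.simples) (hβ : β ∈ R.simples) :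
    β - α ∉ R.posRoots := by
  intro h
  rcases eq_or_ne α β with rfl | hne
  · exact R.nonzero _ h.1 (sub_self α)
  · have hsum := R.coeff_add_s19 h.1 (R.simples_sub hα) (by simpa using R.simples_sub hβ) α hα
    rw [sub_add_cancel, R.coeff_simple_of_ne hβ hα hne, R.coeff_simple_self hα] at hsum
    have := h.2 α hα
    omega

variable {R} {θ abar : V}

lemma coeff_le_of_isHighest (hθ : R.IsHighest θ) {γ α : V} (hγ : γ ∈ R.roots)
    (hα : α ∈ R.simples) : R.coeff γ α ≤ R.coeff θ α :=
  (R.rle_iff_coeff_le hγ hθ.1.1).mp (hθ.2 γ hγ) α hα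

lemma inner_nonneg_of_isHighest (hθ : R.IsHighest θ) {γ : V} (hγ : γ ∈ R.posRoots) :
    0 ≤ ⟪γ, θ⟫_ℝ := by
  by_contra! hneg
  have hsum := R.add_mem_roots_of_inner_neg hγ.1 hθ.1.1 hneg (R.ne_neg_of_mem_posRoots hγ hθ.1)
  obtain ⟨α, hα, hne⟩ := R.exists_coeff_ne_zero hγ.1
  have := R.coeff_add_s19 hγ.1 hθ.1.1 hsum α hα
  have := coeff_le_of_isHighest hθ hsum hα
  have := hγ.2 α hα
  omega

lemma exists_simple_add_mem_posRoots (hθ : R.IsHighest θ) {γ : V} (hγ : γ ∈ R.posRoots)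
    (horth : ⟪γ, θ⟫_ℝ = 0) : ∃ α ∈ R.simples, γ + α ∈ R.posRoots := by
  have hγγ : 0 < ⟪γ, γ⟫_ℝ := real_inner_self_pos.mpr (R.nonzero γ hγ.1)
  obtain ⟨α, hα, hαγ⟩ := R.exists_simple_inner_neg_of_rle (hθ.2 γ hγ.1) (x := γ) <| by
    rw [inner_sub_left, real_inner_comm, horth]; linarith
  have hαpos := R.simple_mem_posRoots hα
  have hsum := R.add_mem_roots_of_inner_neg hγ.1 hαpos.1 (by rwa [real_inner_comm])
    (R.ne_neg_of_mem_posRoots hγ hαpos)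
  refine ⟨α, hα, R.mem_posRoots_of_coeff_pos hsum hα ?_⟩
  rw [R.coeff_add_s19 hγ.1 hαpos.1 hsum α hα, R.coeff_simple_self hα]
  linarith [hγ.2 α hα]

variable (R) in
def rootsWithCoeffOne (abar : V) : Set V := {γ | γ ∈ R.posRoots ∧ R.coeff γ abar = 1}

lemma simple_mem_rootsWithCoeffOne (habar : abar ∈ R.simples) :
    abar ∈ R.rootsWithCoeffOne abar :=
  ⟨R.simple_mem_posRoots habar, R.coeff_simple_self habar⟩

section Cominuscule

variable (hθ : R.IsHighest θ) (habar : abar ∈ R.simples) (hcoeff : R.coeff θ abar = 1)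
include hθ habar hcoeff

lemma coeff_le_one_of_coeff_isHighest_eq_one {γ : V} (hγ : γ ∈ R.roots) : R.coeff γ abar ≤ 1 :=
  hcoeff ▸ coeff_le_of_isHighest hθ hγ habar

lemma rootsWithCoeffOne_eq_setOf_rle :
    R.rootsWithCoeffOne abar = {γ | γ ∈ R.posRoots ∧ R.rle abar γ} := by
  ext γ
  constructor
  · rintro ⟨hγ, hγ_one⟩
    refine ⟨hγ, (R.rle_iff_coeff_le (R.simples_sub habar) hγ.1).mpr fun α hα => ?_⟩
    rcases eq_or_ne α abar with rfl | hne
    · rw [R.coeff_simple_self habar, hγ_one]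
    · rw [R.coeff_simple_of_ne habar hα hne]; exact hγ.2 α hα
  · rintro ⟨hγ, hle⟩
    have := (R.rle_iff_coeff_le (R.simples_sub habar) hγ.1).mp hle abar habar
    rw [R.coeff_simple_self habar] at this
    exact ⟨hγ, le_antisymm (coeff_le_one_of_coeff_isHighest_eq_one hθ habar hcoeff hγ.1) this⟩

lemma isAbelianIdeal_rootsWithCoeffOne : R.IsAbelianIdeal (R.rootsWithCoeffOne abar) := by
  have hle_one {γ} := coeff_le_one_of_coeff_isHighest_eq_one (γ := γ) hθ habar hcoeff
  refine ⟨⟨fun γ hγ => hγ.1, fun ν hν γ hγ hle => ⟨hγ, ?_⟩⟩, fun γ₁ h₁ γ₂ h₂ hsum => ?_⟩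
  · have := (R.rle_iff_coeff_le hν.1.1 hγ.1).mp hle abar habar
    have := hle_one hγ.1
    have := hν.2
    omega
  · have := R.coeff_add_s19 h₁.1.1 h₂.1.1 hsum abar habar
    have := hle_one hsum
    have := h₁.2
    have := h₂.2
    omega

lemma coeff_eq_zero_of_not_mem_rootsWithCoeffOne {γ : V} (hγ : γ ∈ R.posRoots)
    (hγI : γ ∉ R.rootsWithCoeffOne abar) : R.coeff γ abar = 0 := by
  have := coeff_le_one_of_coeff_isHighest_eq_one hθ habar hcoeff hγ.1
  have := hγ.2 abar habar
  have : R.coeff γ abar ≠ 1 := fun h => hγI ⟨hγ, h⟩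
  omega

lemma sub_mem_rootsWithCoeffOne_of_inner_pos {γ : V} (hγ : γ ∈ R.posRoots)
    (hγ_zero : R.coeff γ abar = 0) (hpos : 0 < ⟪γ, θ⟫_ℝ) : θ - γ ∈ R.rootsWithCoeffOne abar := by
  have hne : θ ≠ γ := by rintro rfl; omega
  have hθγ := R.sub_mem_roots_of_inner_pos hθ.1.1 hγ.1 (by rwa [real_inner_comm]) hne
  have hsum := R.coeff_add_s19 hγ.1 hθγ (by rw [add_sub_cancel]; exact hθ.1.1) abar habar
  rw [add_sub_cancel, hcoeff, hγ_zero, zero_add] at hsum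
  exact ⟨R.mem_posRoots_of_coeff_pos hθγ habar (by omega), hsum.symm⟩

lemma eq_rootsWithCoeffOne_of_isAbelianIdeal {J : Set V} (hJ : R.IsAbelianIdeal J)
    (hsub : R.rootsWithCoeffOne abar ⊆ J) : J = R.rootsWithCoeffOne abar := by
  refine (Set.sdiff_eq_empty.mp ?_).antisymm hsub
  by_contra hne
  have hfin : (J \ R.rootsWithCoeffOne abar).Finite :=
    R.finite.subset fun γ hγ => (hJ.1.1 hγ.1).1
  obtain ⟨γ, ⟨hγJ, hγI⟩, hγmax⟩ :=
    hfin.exists_maximalFor R.height _ (Set.nonempty_iff_ne_empty.mpr hne)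
  have hγ := hJ.1.1 hγJ
  have hγ_zero := coeff_eq_zero_of_not_mem_rootsWithCoeffOne hθ habar hcoeff hγ hγI
  rcases (inner_nonneg_of_isHighest hθ hγ).lt_or_eq with hpos | horth
  · refine hJ.2 γ hγJ (θ - γ) (hsub ?_) (by rw [add_sub_cancel]; exact hθ.1.1)
    exact sub_mem_rootsWithCoeffOne_of_inner_pos hθ habar hcoeff hγ hγ_zero hpos
  · obtain ⟨α, hα, hsum⟩ := exists_simple_add_mem_posRoots hθ hγ horth.symm
    have hαpos := R.simple_mem_posRoots hα
    have hcoeff_sum := R.coeff_add_s19 hγ.1 hαpos.1 hsum.1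
    have hsumJ : γ + α ∈ J := hJ.1.2 γ hγJ _ hsum <|
      (R.rle_iff_coeff_le hγ.1 hsum.1).mpr fun β hβ => by
        rw [hcoeff_sum β hβ]; linarith [hαpos.2 β hβ]
    have hsumI : γ + α ∈ R.rootsWithCoeffOne abar := by
      by_contra hsumI
      have := hγmax ⟨hsumJ, hsumI⟩
      rw [R.height_add_simple hγ.1 hα hsum.1] at this
      omega
    have hα_eq : α = abar := by
      by_contra hne
      have := hcoeff_sum abar habar
      rw [hsumI.2, hγ_zero, R.coeff_simple_of_ne hα habar (Ne.symm hne)] at this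
      omega
    subst hα_eq
    exact hJ.2 γ hγJ α (hsub (simple_mem_rootsWithCoeffOne habar)) hsum.1

lemma minSet_rootsWithCoeffOne : R.minSet (R.rootsWithCoeffOne abar) = {abar} := by
  have habarI := simple_mem_rootsWithCoeffOne habar
  rw [rootsWithCoeffOne_eq_setOf_rle hθ habar hcoeff] at habarI ⊢
  ext γ
  constructor
  · rintro ⟨⟨-, hle⟩, hmin⟩
    exact (hmin abar habarI hle).symm
  · rintro rfl
    exact ⟨habarI, fun ν ⟨hν, hle⟩ hle' => R.eq_of_rle_of_rle hν.1 (R.simples_sub habar) hle' hle⟩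

lemma normS_rootsWithCoeffOne : R.normS (R.rootsWithCoeffOne abar) = {abar} := by
  ext α
  simp only [normS, minSet_rootsWithCoeffOne hθ habar hcoeff, Set.mem_singleton_iff,
    exists_eq_left, Set.mem_ofPred_eq]
  constructor
  · rintro ⟨hα, hsub | heq⟩
    · exact absurd hsub (R.sub_simple_not_mem_posRoots hα habar)
    · exact heq.symm
  · rintro rfl
    exact ⟨habar, Or.inr rfl⟩

end Cominuscule

end RootSystemData

theorem stmt19_general {V : Type} [NormedAddCommGroup V] [InnerProductSpace ℝ V] [FiniteDimensional ℝ V]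
    (R : RootSystemData V) (θ : V) (hθ : R.IsHighest θ)
    (abar : V) (habar : abar ∈ R.simples)
    (hcoeff : R.coeff θ abar = 1)
    (I : Set V) (hIdef : I = {γ : V | γ ∈ R.posRoots ∧ R.coeff γ abar = 1}) :
    I = {γ : V | γ ∈ R.posRoots ∧ R.rle abar γ}
      ∧ R.IsAbelianIdeal I
      ∧ (∀ J : Set V, R.IsAbelianIdeal J → I ⊆ J → J = I)
      ∧ R.normS I = {abar} := by
  subst hIdef
  exact ⟨R.rootsWithCoeffOne_eq_setOf_rle hθ habar hcoeff,
    R.isAbelianIdeal_rootsWithCoeffOne hθ habar hcoeff,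
    fun _ hJ hsub => R.eq_rootsWithCoeffOne_of_isAbelianIdeal hθ habar hcoeff hJ hsub,
    R.normS_rootsWithCoeffOne hθ habar hcoeff⟩

/-- Example 4.3: if `ᾱ` is a long simple root with `[θ:ᾱ] = 1`, then
`{γ ∈ Δ⁺ : [γ:ᾱ] = 1} = {γ ∈ Δ⁺ : ᾱ ≼ γ}` is an abelian upper ideal which is maximal
among abelian upper ideals, and `S` of this ideal is `{ᾱ}`. -/
theorem stmt19 {V : Type} [NormedAddCommGroup V] [InnerProductSpace ℝ V] [FiniteDimensional ℝ V]
    (R : RootSystemData V) (θ : V) (hθ : R.IsHighest θ)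
    (abar : V) (habar : abar ∈ R.simples) (hlong : R.IsLong abar)
    (hcoeff : R.coeff θ abar = 1)
    (I : Set V) (hIdef : I = {γ : V | γ ∈ R.posRoots ∧ R.coeff γ abar = 1}) :
    I = {γ : V | γ ∈ R.posRoots ∧ R.rle abar γ}
      ∧ R.IsAbelianIdeal I
      ∧ (∀ J : Set V, R.IsAbelianIdeal J → I ⊆ J → J = I)
      ∧ R.normS I = {abar} :=
  stmt19_general R θ hθ abar habar hcoeff I hIdef
end
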